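/- arXiv:1409.1839 — 3 statements merged into one kernel-verified Lean document; each statement's English description precedes it below -/
import Mathlib

section
/- Let D be a Boolean algebra, let A and B be Boolean subalgebras of D, and let C be a Boolean subalgebra of both A and B. Assume C is atomic and C sits nicely in A and C sits nicely in B. Then A is independent from B over C if and only if for every atom c of C, every a ∈ A and every b ∈ B with a ≤ c, b ≤ c, a ∉ {0, c} and b ∉ {0, c}, the elements a and b are incomparable (neither a ≤ b nor b ≤ a). -/
/-- `S` is (the underlying set of) a Boolean subalgebra of the Boolean algebra `D`. -/
def IsBooleanSubalg {D : Type*} [BooleanAlgebra D] (S : Set D) : Prop :=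
  ⊥ ∈ S ∧ ⊤ ∈ S ∧ (∀ a ∈ S, ∀ b ∈ S, a ⊓ b ∈ S) ∧ (∀ a ∈ S, ∀ b ∈ S, a ⊔ b ∈ S) ∧
    (∀ a ∈ S, aᶜ ∈ S)

/-- `a` is an atom of the subalgebra `S`: a nonzero element of `S` with no element of `S`
strictly between it and `⊥`. -/
def AtomIn {D : Type*} [BooleanAlgebra D] (S : Set D) (a : D) : Prop :=
  a ∈ S ∧ a ≠ ⊥ ∧ ∀ b ∈ S, b ≤ a → b = ⊥ ∨ b = a

/-- `a` is a least upper bound of the family `T` within the subalgebra `S`. -/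
def LubIn {D : Type*} [BooleanAlgebra D] (S T : Set D) (a : D) : Prop :=
  a ∈ S ∧ (∀ t ∈ T, t ≤ a) ∧ ∀ u ∈ S, (∀ t ∈ T, t ≤ u) → a ≤ u

/-- `C` is a regular subalgebra of `A`: any least upper bound within `C` of a family of
elements of `C` is also a least upper bound of the family within `A`. -/
def RegularIn {D : Type*} [BooleanAlgebra D] (C A : Set D) : Prop :=
  ∀ T ⊆ C, ∀ c, LubIn C T c → LubIn A T c

/-- `C` sits nicely in `A`: `C` is a regular subalgebra of `A` and every element of `A`
has a least element of `C` above it. -/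
def SitsNicelyIn {D : Type*} [BooleanAlgebra D] (C A : Set D) : Prop :=
  RegularIn C A ∧ ∀ a ∈ A, ∃ c ∈ C, a ≤ c ∧ ∀ c' ∈ C, a ≤ c' → c ≤ c'

/-- The subalgebra `S` is atomic: every element of `S` is the supremum (within `S`) of the
atoms of `S` that it dominates. -/
def AtomicIn {D : Type*} [BooleanAlgebra D] (S : Set D) : Prop :=
  ∀ a ∈ S, LubIn S {c | AtomIn S c ∧ c ≤ a} a

/-- `A` is independent from `B` over `C`. -/
def IndepOver {D : Type*} [BooleanAlgebra D] (A B C : Set D) : Prop :=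
  ∀ a ∈ A, ∀ b ∈ B, a ≤ b → ∃ c ∈ C, a ≤ c ∧ c ≤ b

theorem indep_iff_incomparable_below_atoms
    {D : Type*} [BooleanAlgebra D] (A B C : Set D)
    (hA : IsBooleanSubalg A) (hB : IsBooleanSubalg B) (hC : IsBooleanSubalg C)
    (hCA : C ⊆ A) (hCB : C ⊆ B)
    (hCat : AtomicIn C) (hNA : SitsNicelyIn C A) (hNB : SitsNicelyIn C B) :
    IndepOver A B C ↔
      ∀ c, AtomIn C c → ∀ a ∈ A, ∀ b ∈ B,
        a ≤ c → b ≤ c → a ∉ ({⊥, c} : Set D) → b ∉ ({⊥, c} : Set D) →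
          ¬ a ≤ b ∧ ¬ b ≤ a := by
  obtain ⟨hCbot, hCtop, hCinf, hCsup, hCcompl⟩ := hC
  constructor
  · rintro hInd c ⟨hcC, hcne, hcatom⟩ a haA b hbB hac hbc ha hb
    simp only [Set.mem_insert_iff, Set.mem_singleton_iff, not_or] at ha hb
    constructor
    · intro hab
      obtain ⟨c', hc'C, hac', hc'b⟩ := hInd a haA b hbB hab
      have h1 : c' ⊓ c ∈ C := hCinf _ hc'C _ hcC
      rcases hcatom _ h1 inf_le_right with h | h
      · exact ha.1 (le_bot_iff.mp (h ▸ le_inf hac' hac))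
      · have hcb : c ≤ b := h ▸ (inf_le_left.trans hc'b)
        exact hb.2 (le_antisymm hbc hcb)
    · intro hba
      obtain ⟨c', hc'C, hac', hc'b⟩ :=
        hInd aᶜ (hA.2.2.2.2 a haA) bᶜ (hB.2.2.2.2 b hbB) (compl_le_compl hba)
      have hbc' : b ≤ c'ᶜ := by
        have := compl_le_compl hc'b; simpa using this
      have hc'a : c'ᶜ ≤ a := by
        have := compl_le_compl hac'; simpa using this
      have h1 : c'ᶜ ⊓ c ∈ C := hCinf _ (hCcompl _ hc'C) _ hcC
      rcases hcatom _ h1 inf_le_right with h | h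
      · exact hb.1 (le_bot_iff.mp (h ▸ le_inf hbc' hbc))
      · have hca : c ≤ a := h ▸ (inf_le_left.trans hc'a)
        exact ha.2 (le_antisymm hac hca)
  · rintro H a haA b hbB hab
    obtain ⟨p, hpC, hap, hpmin⟩ := hNA.2 a haA
    obtain ⟨q, hqC, hbq, hqmin⟩ := hNB.2 bᶜ (hB.2.2.2.2 b hbB)
    refine ⟨p, hpC, hap, ?_⟩
    have hqb : qᶜ ≤ b := by
      have := compl_le_compl hbq; simpa using this
    have hkey : ∀ c', AtomIn C c' → c' ≤ p → c' ≤ qᶜ := by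
      rintro c' ⟨hc'C, hc'ne, hc'atom⟩ hc'p
      have hane : a ⊓ c' ≠ ⊥ := by
        intro h
        have hac : a ≤ c'ᶜ := le_compl_iff_disjoint_right.mpr (disjoint_iff.mpr h)
        have hmem : p ⊓ c'ᶜ ∈ C := hCinf _ hpC _ (hCcompl _ hc'C)
        have hp2 : p ≤ p ⊓ c'ᶜ := hpmin _ hmem (le_inf hap hac)
        have : c' ≤ c'ᶜ := hc'p.trans (hp2.trans inf_le_right)
        exact hc'ne (le_bot_iff.mp (by simpa using le_inf le_rfl this))
      by_contra hle
      have hcb : ¬ c' ≤ b := by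
        intro h
        have hq2 : q ≤ c'ᶜ := hqmin _ (hCcompl _ hc'C) (compl_le_compl h)
        have : c' ≤ qᶜ := by
          have := compl_le_compl hq2; simpa using this
        exact hle this
      have h1 : a ⊓ c' ∈ A := hA.2.2.1 a haA c' (hCA hc'C)
      have h2 : b ⊓ c' ∈ B := hB.2.2.1 b hbB c' (hCB hc'C)
      have hab' : a ⊓ c' ≤ b ⊓ c' := inf_le_inf_right _ hab
      have hna : a ⊓ c' ∉ ({⊥, c'} : Set D) := by
        simp only [Set.mem_insert_iff, Set.mem_singleton_iff, not_or]
        refine ⟨hane, fun h => hcb ?_⟩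
        have : c' ≤ a := h ▸ inf_le_left
        exact this.trans hab
      have hnb : b ⊓ c' ∉ ({⊥, c'} : Set D) := by
        simp only [Set.mem_insert_iff, Set.mem_singleton_iff, not_or]
        constructor
        · intro h
          exact hane (le_bot_iff.mp (h ▸ hab'))
        · intro h
          exact hcb (h ▸ inf_le_left)
      exact (H c' ⟨hc'C, hc'ne, hc'atom⟩ _ h1 _ h2 inf_le_right inf_le_right hna hnb).1 hab'
    obtain ⟨_, _, hlub⟩ := hCat p hpC
    have hpq : p ≤ qᶜ := hlub _ (hCcompl _ hqC) (fun t ht => hkey t ht.1 ht.2)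
    exact hpq.trans hqb
end

section
/- Let D be a Boolean algebra, let A and B be Boolean subalgebras of D, and let C be a Boolean subalgebra of both A and B. Assume A, B and C are atomic and C sits nicely in A and C sits nicely in B. Then A is independent from B over C if and only if for every atom a of A and every atom b of B with a ≤ ¬b there exists an atom c of C such that a ≤ ¬c and b ≤ c. -/
lemma atom_split' {D : Type*} [BooleanAlgebra D] {S : Set D} (hS : IsBooleanSubalg S)
    {b : D} (hb : AtomIn S b) {x : D} (hx : x ∈ S) : b ≤ x ∨ b ≤ xᶜ := by
  rcases hb.2.2 (b ⊓ x) (hS.2.2.1 b hb.1 x hx) inf_le_left with h | h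
  · right; rw [le_compl_iff_disjoint_right, disjoint_iff]; exact h
  · left; exact inf_eq_left.mp h

lemma atom_eq' {D : Type*} [BooleanAlgebra D] {S : Set D} (hS : IsBooleanSubalg S)
    {c d : D} (hc : AtomIn S c) (hd : AtomIn S d) (h : c ⊓ d ≠ ⊥) : c = d := by
  have hm : c ⊓ d ∈ S := hS.2.2.1 c hc.1 d hd.1
  rcases hc.2.2 _ hm inf_le_left with h1 | h1
  · exact absurd h1 h
  · rcases hd.2.2 _ hm inf_le_right with h2 | h2
    · exact absurd h2 h
    · rw [← h1, h2]

lemma le_compl_self_bot' {D : Type*} [BooleanAlgebra D] {d : D} (h : d ≤ dᶜ) : d = ⊥ :=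
  le_antisymm (by simpa using le_inf le_rfl h) bot_le

lemma proj_atom' {D : Type*} [BooleanAlgebra D] {B C : Set D}
    (hB : IsBooleanSubalg B) (hC : IsBooleanSubalg C) (hCB : C ⊆ B)
    {β c₁ : D} (hβ : AtomIn B β) (hc₁ : c₁ ∈ C) (hle : β ≤ c₁)
    (hmin : ∀ c' ∈ C, β ≤ c' → c₁ ≤ c') : AtomIn C c₁ := by
  refine ⟨hc₁, ?_, ?_⟩
  · rintro rfl; exact hβ.2.1 (le_bot_iff.mp hle)
  · intro d hd hdle
    rcases atom_split' hB hβ (hCB hd) with h | h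
    · right; exact le_antisymm hdle (hmin d hd h)
    · left
      have h1 : c₁ ≤ dᶜ := hmin dᶜ (hC.2.2.2.2 d hd) h
      exact le_compl_self_bot' (hdle.trans h1)

theorem indep_iff_atom_separation
    {D : Type*} [BooleanAlgebra D] (A B C : Set D)
    (hA : IsBooleanSubalg A) (hB : IsBooleanSubalg B) (hC : IsBooleanSubalg C)
    (hCA : C ⊆ A) (hCB : C ⊆ B)
    (hAat : AtomicIn A) (hBat : AtomicIn B) (hCat : AtomicIn C)
    (hNA : SitsNicelyIn C A) (hNB : SitsNicelyIn C B) :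
    IndepOver A B C ↔
      ∀ a, AtomIn A a → ∀ b, AtomIn B b → a ≤ bᶜ →
        ∃ c, AtomIn C c ∧ a ≤ cᶜ ∧ b ≤ c := by
  constructor
  · intro hind a ha b hb hab
    obtain ⟨c0, hc0C, hac0, hc0b⟩ := hind a ha.1 bᶜ (hB.2.2.2.2 b hb.1) hab
    by_contra hno
    push_neg at hno
    have hbc0 : b ≤ c0ᶜ := by
      have := compl_le_compl hc0b; simpa using this
    -- every atom of C below c0ᶜ is below bᶜ
    have hub : ∀ t ∈ {c | AtomIn C c ∧ c ≤ c0ᶜ}, t ≤ bᶜ := by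
      rintro t ⟨htat, htle⟩
      have hac : a ≤ tᶜ := hac0.trans (by simpa using compl_le_compl htle)
      have hnb : ¬ b ≤ t := hno t htat hac
      rcases atom_split' hB hb (hCB htat.1) with h | h
      · exact absurd h hnb
      · rw [le_compl_iff_disjoint_right, disjoint_iff] at h ⊢
        rwa [inf_comm] at h
    have hlubC := hCat c0ᶜ (hC.2.2.2.2 c0 hc0C)
    have hlubB := hNB.1 _ (fun x hx => hx.1.1) _ hlubC
    have hle : c0ᶜ ≤ bᶜ := hlubB.2.2 bᶜ (hB.2.2.2.2 b hb.1) hub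
    exact hb.2.1 (le_compl_self_bot' (hbc0.trans hle))
  · intro hsep a haA b hbB hab
    obtain ⟨c0, hc0C, hac0, hc0min⟩ := hNA.2 a haA
    refine ⟨c0, hc0C, hac0, ?_⟩
    -- every atom β of B below bᶜ satisfies β ≤ c0ᶜ
    have hub : ∀ β ∈ {c | AtomIn B c ∧ c ≤ bᶜ}, β ≤ c0ᶜ := by
      rintro β ⟨hβ, hβle⟩
      obtain ⟨c1, hc1C, hβc1, hc1min⟩ := hNB.2 β hβ.1
      have hc1at : AtomIn C c1 := proj_atom' hB hC hCB hβ hc1C hβc1 hc1min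
      -- every atom α of A below a is ≤ c1ᶜ
      have haub : ∀ α ∈ {c | AtomIn A c ∧ c ≤ a}, α ≤ c1ᶜ := by
        rintro α ⟨hα, hαle⟩
        have hαβ : α ≤ βᶜ := by
          have : b ≤ βᶜ := by have := compl_le_compl hβle; simpa using this
          exact hαle.trans (hab.trans this)
        obtain ⟨c, hcat, hαc, hβc⟩ := hsep α hα β hβ hαβ
        have hcc1 : c = c1 := by
          refine atom_eq' hC hcat hc1at ?_
          intro h
          exact hβ.2.1 (le_bot_iff.mp (h ▸ le_inf hβc hβc1))
        rwa [hcc1] at hαc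
      have hlubA := hAat a haA
      have hac1 : a ≤ c1ᶜ := hlubA.2.2 c1ᶜ (hCA (hC.2.2.2.2 c1 hc1C)) haub
      have : c0 ≤ c1ᶜ := hc0min c1ᶜ (hC.2.2.2.2 c1 hc1C) hac1
      calc β ≤ c1 := hβc1
        _ ≤ c0ᶜ := by have := compl_le_compl this; simpa using this
    have hlubB := hBat bᶜ (hB.2.2.2.2 b hbB)
    have : bᶜ ≤ c0ᶜ := hlubB.2.2 c0ᶜ (hCB (hC.2.2.2.2 c0 hc0C)) hub
    have := compl_le_compl this; simpa using this
end

section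
/- Let D be a Boolean algebra, let A and B be Boolean subalgebras of D, and let C be a Boolean subalgebra of both A and B. Assume A, B and C are atomic and C sits nicely in A and C sits nicely in B. Then A is independent from B over C if and only if for every atom a of A and every atom b of B, if a lies below the unique atom of C dominating b, then a ⊓ b ≠ 0. -/
lemma inf_bot_iff_le_compl {D : Type*} [BooleanAlgebra D] {a b : D} :
    a ⊓ b = ⊥ ↔ a ≤ bᶜ := by
  rw [← disjoint_iff, ← le_compl_iff_disjoint_right]

/-- In an atomic subalgebra, every nonzero element dominates an atom. -/
lemma exists_atomIn_le {D : Type*} [BooleanAlgebra D] {S : Set D}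
    (hS : AtomicIn S) (hbot : ⊥ ∈ S) {x : D} (hx : x ∈ S) (hx0 : x ≠ ⊥) :
    ∃ a, AtomIn S a ∧ a ≤ x := by
  by_contra h
  push_neg at h
  obtain ⟨-, -, hlub⟩ := hS x hx
  exact hx0 (le_bot_iff.mp (hlub ⊥ hbot fun t ht => absurd ht.2 (h t ht.1)))

/-- Every atom of `B` lies below some atom of `C`, when `C ⊆ B` is atomic and regular. -/
lemma exists_atomIn_above {D : Type*} [BooleanAlgebra D] {B C : Set D}
    (hB : IsBooleanSubalg B) (hC : IsBooleanSubalg C) (hCB : C ⊆ B)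
    (hCat : AtomicIn C) (hreg : RegularIn C B) {b : D} (hb : AtomIn B b) :
    ∃ e, AtomIn C e ∧ b ≤ e := by
  by_contra h
  push_neg at h
  have htop := hreg _ (fun t ht => ht.1.1) ⊤ (hCat ⊤ hC.2.1)
  have hub : ∀ t ∈ {c | AtomIn C c ∧ c ≤ (⊤ : D)}, t ≤ bᶜ := by
    rintro t ⟨ht, -⟩
    rw [← inf_bot_iff_le_compl, inf_comm]
    rcases hb.2.2 (b ⊓ t) (hB.2.2.1 b hb.1 t (hCB ht.1)) inf_le_left with h0 | hbt
    · exact h0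
    · exact absurd (hbt ▸ inf_le_right) (h t ht)
  have : (⊤ : D) ≤ bᶜ := htop.2.2 bᶜ (hB.2.2.2.2 b hb.1) hub
  have : b ≤ bᶜ := le_trans le_top this
  exact hb.2.1 (le_bot_iff.mp (by
    calc b ≤ b ⊓ bᶜ := le_inf le_rfl this
    _ = ⊥ := inf_compl_eq_bot))

theorem indep_iff_atoms_meet_below_dominating_atom
    {D : Type*} [BooleanAlgebra D] (A B C : Set D)
    (hA : IsBooleanSubalg A) (hB : IsBooleanSubalg B) (hC : IsBooleanSubalg C)
    (hCA : C ⊆ A) (hCB : C ⊆ B)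
    (hAat : AtomicIn A) (hBat : AtomicIn B) (hCat : AtomicIn C)
    (hNA : SitsNicelyIn C A) (hNB : SitsNicelyIn C B) :
    IndepOver A B C ↔
      ∀ a, AtomIn A a → ∀ b, AtomIn B b →
        ∀ c, AtomIn C c → b ≤ c → a ≤ c → a ⊓ b ≠ ⊥ := by
  constructor
  · intro hind a ha b hb c hc hbc hac hab
    have haleb : a ≤ bᶜ := inf_bot_iff_le_compl.mp hab
    obtain ⟨c', hc'C, hac', hc'b⟩ := hind a ha.1 bᶜ (hB.2.2.2.2 b hb.1) haleb
    have hcc' : c ⊓ c' ∈ C := hC.2.2.1 c hc.1 c' hc'C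
    rcases hc.2.2 (c ⊓ c') hcc' inf_le_left with h0 | hcc
    · exact ha.2.1 (le_bot_iff.mp (h0 ▸ le_inf hac hac'))
    · have : b ≤ bᶜ := le_trans (le_trans hbc (hcc ▸ inf_le_right)) hc'b
      have : b = ⊥ := le_bot_iff.mp (by
        calc b ≤ b ⊓ bᶜ := le_inf le_rfl this
        _ = ⊥ := inf_compl_eq_bot)
      exact hb.2.1 this
  · intro hyp a haA b hbB hab
    obtain ⟨c, hcC, hac, hleast⟩ := hNA.2 a haA
    refine ⟨c, hcC, hac, ?_⟩
    by_contra hcb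
    have hcb' : c ⊓ bᶜ ≠ ⊥ := fun h =>
      hcb (by simpa using inf_bot_iff_le_compl.mp h)
    have hcbB : c ⊓ bᶜ ∈ B := hB.2.2.1 c (hCB hcC) bᶜ (hB.2.2.2.2 b hbB)
    obtain ⟨b₀, hb₀, hb₀le⟩ := exists_atomIn_le hBat hB.1 hcbB hcb'
    obtain ⟨e, he, hb₀e⟩ := exists_atomIn_above hB hC hCB hCat hNB.1 hb₀
    -- e ≤ c
    have hce : c ⊓ e ∈ C := hC.2.2.1 c hcC e he.1
    have hec : e ≤ c := by
      rcases he.2.2 (c ⊓ e) hce inf_le_right with h0 | hh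
      · exact absurd (le_bot_iff.mp (h0 ▸ le_inf (le_trans hb₀le inf_le_left) hb₀e))
          hb₀.2.1
      · exact hh ▸ inf_le_left
    -- a ⊓ e ≠ ⊥
    have hae : a ⊓ e ≠ ⊥ := by
      intro h
      have hale : a ≤ c ⊓ eᶜ := le_inf hac (inf_bot_iff_le_compl.mp h)
      have := hleast (c ⊓ eᶜ) (hC.2.2.1 c hcC eᶜ (hC.2.2.2.2 e he.1)) hale
      have : e ≤ eᶜ := le_trans hec (le_trans this inf_le_right)
      exact he.2.1 (le_bot_iff.mp (by
        calc e ≤ e ⊓ eᶜ := le_inf le_rfl this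
        _ = ⊥ := inf_compl_eq_bot))
    obtain ⟨a₀, ha₀, ha₀le⟩ := exists_atomIn_le hAat hA.1
      (hA.2.2.1 a haA e (hCA he.1)) hae
    have := hyp a₀ ha₀ b₀ hb₀ e he hb₀e (le_trans ha₀le inf_le_right)
    apply this
    have h1 : a₀ ≤ b := le_trans (le_trans ha₀le inf_le_left) hab
    have h2 : b₀ ≤ bᶜ := le_trans hb₀le inf_le_right
    exact le_bot_iff.mp (le_trans (inf_le_inf h1 h2) (by simp))
end
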